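/- arXiv:2403.05284 — 3 statements merged into one kernel-verified Lean document; each statement's English description precedes it below -/
import Mathlib

section
/- The mutated Lie algebra g' = h ⊕ m with [M_a, M_b] = k₁k₂ J_{ab} is a symmetric Lie algebra: it satisfies [h,h] ⊆ h, [h,m] ⊆ m, and [m,m] ⊆ h, for any nonzero real parameters k₁, k₂. -/
open Matrix

noncomputable section

/-- The Minkowski metric η = diag(-1,1,1,1). -/
def η4 : Matrix (Fin 4) (Fin 4) ℝ := Matrix.diagonal ![-1, 1, 1, 1]

/-- A vector v ∈ ℝ^{3,1} as a column matrix. -/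
def colv (v : Fin 4 → ℝ) : Matrix (Fin 4) (Fin 1) ℝ := Matrix.of fun i _ => v i

/-- The row vector v̄ = vᵀ η. -/
def rowbar (v : Fin 4 → ℝ) : Matrix (Fin 1) (Fin 4) ℝ := Matrix.of fun _ j => ∑ i, v i * η4 i j

/-- The so(3,1) generators J_{ab} as 4×4 matrices. -/
def J4 (a b : Fin 4) : Matrix (Fin 4) (Fin 4) ℝ :=
  Matrix.of fun i j => (if i = a then η4 b j else 0) - (if i = b then η4 a j else 0)

/-- The generators J_{ab} embedded as 5×5 matrices. -/
def J5 (a b : Fin 4) : Matrix (Fin 4 ⊕ Fin 1) (Fin 4 ⊕ Fin 1) ℝ :=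
  fromBlocks (J4 a b) 0 0 0

/-- The mutated translation generators M_a = ((0, k₁ e_a),(k₂ ē_a, 0)). -/
def M5 (k₁ k₂ : ℝ) (a : Fin 4) : Matrix (Fin 4 ⊕ Fin 1) (Fin 4 ⊕ Fin 1) ℝ :=
  fromBlocks 0 (k₁ • colv (Pi.single a 1)) (k₂ • rowbar (Pi.single a 1)) 0

/-- h = so(3,1), spanned by the J_{ab}. -/
def hSub : Submodule ℝ (Matrix (Fin 4 ⊕ Fin 1) (Fin 4 ⊕ Fin 1) ℝ) :=
  Submodule.span ℝ {X | ∃ a b : Fin 4, X = J5 a b}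

/-- m, spanned by the mutated translation generators M_a. -/
def mSub (k₁ k₂ : ℝ) : Submodule ℝ (Matrix (Fin 4 ⊕ Fin 1) (Fin 4 ⊕ Fin 1) ℝ) :=
  Submodule.span ℝ {X | ∃ a : Fin 4, X = M5 k₁ k₂ a}

abbrev Ee (a b : Fin 4) : Matrix (Fin 4) (Fin 4) ℝ := Matrix.single a b 1

lemma Ee_mul (a b c d : Fin 4) : Ee a b * Ee c d = (if b = c then (1:ℝ) else 0) • Ee a d := by
  by_cases h : b = c
  · subst h; simp [Matrix.single_mul_single_same]
  · rw [Matrix.single_mul_single_of_ne (h := h)]; simp [h]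

lemma η4_apply (a b : Fin 4) : η4 a b = (if a = b then (1:ℝ) else 0) * η4 a a := by
  by_cases h : a = b
  · subst h; simp
  · simp [η4, Matrix.diagonal_apply_ne _ h, h]

lemma ec (x y : Fin 4) : (if x = y then (1:ℝ) else 0) = if y = x then 1 else 0 := by
  simp [eq_comm]

lemma J4_eq (a b : Fin 4) : J4 a b = η4 b b • Ee a b - η4 a a • Ee b a := by
  ext i j
  simp only [J4, Matrix.of_apply, Matrix.sub_apply, Matrix.smul_apply, Matrix.single,
    smul_eq_mul, Matrix.of_apply]
  rw [η4_apply b j, η4_apply a j]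
  by_cases hia : i = a <;> by_cases hib : i = b <;> by_cases hja : j = a <;> by_cases hjb : j = b <;>
    simp [hia, hib, hja, hjb, eq_comm] <;> (try split_ifs) <;> (try simp_all) <;> (try ring) <;> (exfalso; omega)

lemma J4_bracket (a b c d : Fin 4) :
    J4 a b * J4 c d - J4 c d * J4 a b =
    η4 b c • J4 a d - η4 b d • J4 a c - η4 a c • J4 b d + η4 a d • J4 b c := by
  simp only [J4_eq, smul_sub, sub_mul, mul_sub, smul_mul_assoc, mul_smul_comm, Ee_mul,
    smul_smul]
  rw [η4_apply b c, η4_apply b d, η4_apply a c, η4_apply a d,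
    ec d a, ec d b, ec c a, ec c b]
  by_cases h1 : a = c <;> by_cases h2 : a = d <;> by_cases h3 : b = c <;> by_cases h4 : b = d <;>
    by_cases h5 : c = d <;>
    simp only [h1, h2, h3, h4, h5, ec d c, eq_self_iff_true, if_true, if_false,
      one_mul, zero_mul, mul_zero, mul_one, zero_smul] <;>
    module


lemma η4_symm (a b : Fin 4) : η4 a b = η4 b a := by
  by_cases h : a = b
  · subst h; rfl
  · rw [η4, Matrix.diagonal_apply_ne _ h, Matrix.diagonal_apply_ne _ (Ne.symm h)]

lemma rowbar_single (a : Fin 4) (j : Fin 4) : rowbar (Pi.single a 1) 0 j = η4 a j := by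
  simp [rowbar, Pi.single_apply, ite_mul, Finset.sum_ite_eq]

lemma colv_single (a i : Fin 4) : colv (Pi.single a 1) i 0 = if i = a then (1:ℝ) else 0 := by
  simp [colv, Pi.single_apply, eq_comm]

-- [J5, J5]
lemma J5_bracket (a b c d : Fin 4) :
    J5 a b * J5 c d - J5 c d * J5 a b =
    η4 b c • J5 a d - η4 b d • J5 a c - η4 a c • J5 b d + η4 a d • J5 b c := by
  simp only [J5, Matrix.fromBlocks_multiply, Matrix.mul_zero, Matrix.zero_mul, add_zero,
    zero_add, Matrix.fromBlocks_smul, smul_zero]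
  ext (i | i) (j | j)
  · have h := congrFun (congrFun (J4_bracket a b c d) i) j
    simpa [Matrix.sub_apply, Matrix.add_apply, Matrix.smul_apply, Matrix.fromBlocks] using h
  all_goals simp [Matrix.fromBlocks, Matrix.sub_apply, Matrix.add_apply]

-- [J5, M5]
lemma JM_bracket (k₁ k₂ : ℝ) (c d a : Fin 4) :
    J5 c d * M5 k₁ k₂ a - M5 k₁ k₂ a * J5 c d =
    η4 d a • M5 k₁ k₂ c - η4 c a • M5 k₁ k₂ d := by
  simp only [J5, M5, Matrix.fromBlocks_multiply, Matrix.mul_zero, Matrix.zero_mul, add_zero,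
    zero_add, Matrix.fromBlocks_smul, smul_zero]
  ext (i | i) (j | j)
  · simp [Matrix.fromBlocks, Matrix.sub_apply]
  · simp [Matrix.fromBlocks, Matrix.sub_apply, Matrix.mul_apply, J4, colv, rowbar,
      Pi.single_apply, sub_mul, ite_mul, mul_ite, mul_zero, zero_mul,
      Finset.sum_sub_distrib, Finset.sum_ite_eq, Finset.sum_ite_eq']
    try (rw [η4_apply d a, η4_apply c a]
         by_cases h1 : i = c <;> by_cases h2 : i = d <;> by_cases h3 : d = a <;> by_cases h4 : c = a <;>
           simp_all [eq_comm] <;> ring)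
  · simp [Matrix.fromBlocks, Matrix.sub_apply, Matrix.mul_apply, J4, colv, rowbar,
      Pi.single_apply, mul_sub, sub_mul, ite_mul, mul_ite, mul_zero, zero_mul,
      Finset.sum_sub_distrib, Finset.sum_ite_eq, Finset.sum_ite_eq']
    try (rw [η4_apply a d, η4_apply a c, η4_apply c j, η4_apply d j, η4_apply d a, η4_apply c a]
         by_cases h1 : c = j <;> by_cases h2 : d = j <;> by_cases h3 : d = a <;> by_cases h4 : c = a <;>
         by_cases h5 : a = j <;>
           simp_all [eq_comm] <;> ring)
  · simp [Matrix.fromBlocks, Matrix.sub_apply]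

-- [M5, M5]
lemma MM_bracket (k₁ k₂ : ℝ) (a b : Fin 4) :
    M5 k₁ k₂ a * M5 k₁ k₂ b - M5 k₁ k₂ b * M5 k₁ k₂ a = (k₁ * k₂) • J5 a b := by
  simp only [J5, M5, Matrix.fromBlocks_multiply, Matrix.mul_zero, Matrix.zero_mul, add_zero,
    zero_add, Matrix.fromBlocks_smul, smul_zero]
  ext (i | i) (j | j)
  · simp [Matrix.fromBlocks, Matrix.sub_apply, Matrix.mul_apply, J4, colv, rowbar,
      Pi.single_apply, ite_mul, mul_ite, mul_zero, zero_mul,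
      Finset.sum_ite_eq, Finset.sum_ite_eq']
    try (by_cases h1 : i = a <;> by_cases h2 : i = b <;> simp_all [eq_comm] <;> (try ring))
  · simp [Matrix.fromBlocks, Matrix.sub_apply]
  · simp [Matrix.fromBlocks, Matrix.sub_apply]
  · simp [Matrix.fromBlocks, Matrix.sub_apply, Matrix.mul_apply, colv, rowbar,
      Pi.single_apply, ite_mul, mul_ite, mul_zero, zero_mul,
      Finset.sum_ite_eq, Finset.sum_ite_eq']
    try (rw [η4_apply a b, η4_apply b a]
         by_cases h : a = b <;> simp_all [eq_comm] <;> ring)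


lemma span_bracket {M : Type*} [Ring M] [Module ℝ M] [IsScalarTower ℝ M M] [SMulCommClass ℝ M M]
    {S T : Set M} {r : Submodule ℝ M}
    (h : ∀ x ∈ S, ∀ y ∈ T, x * y - y * x ∈ r) :
    ∀ x ∈ Submodule.span ℝ S, ∀ y ∈ Submodule.span ℝ T, x * y - y * x ∈ r := by
  have key : ∀ x ∈ S, ∀ y ∈ Submodule.span ℝ T, x * y - y * x ∈ r := by
    intro x hx y hy
    induction hy using Submodule.span_induction with
    | mem y hyT => exact h x hx y hyT
    | zero => simpa using r.zero_mem
    | add y z _ _ hy hz =>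
        have e : x * (y + z) - (y + z) * x = (x * y - y * x) + (x * z - z * x) := by noncomm_ring
        rw [e]; exact r.add_mem hy hz
    | smul c y _ hy =>
        have e : x * (c • y) - (c • y) * x = c • (x * y - y * x) := by
          rw [mul_smul_comm, smul_mul_assoc, smul_sub]
        rw [e]; exact r.smul_mem c hy
  intro x hx
  induction hx using Submodule.span_induction with
  | mem x hxS => exact key x hxS
  | zero => intro y hy; simpa using r.zero_mem
  | add x z _ _ hx hz =>
      intro y hy
      have e : (x + z) * y - y * (x + z) = (x * y - y * x) + (z * y - y * z) := by noncomm_ring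
      rw [e]; exact r.add_mem (hx y hy) (hz y hy)
  | smul c x _ hx =>
      intro y hy
      have e : (c • x) * y - y * (c • x) = c • (x * y - y * x) := by
        rw [mul_smul_comm, smul_mul_assoc, smul_sub]
      rw [e]; exact r.smul_mem c (hx y hy)


lemma J5_mem (a b : Fin 4) : J5 a b ∈ hSub :=
  Submodule.subset_span ⟨a, b, rfl⟩

lemma M5_mem (k₁ k₂ : ℝ) (a : Fin 4) : M5 k₁ k₂ a ∈ mSub k₁ k₂ :=
  Submodule.subset_span ⟨a, rfl⟩


/-- the mutated Lie algebra g' = h ⊕ m (with [M_a,M_b] = k₁k₂ J_{ab})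
is a symmetric Lie algebra: [h,h] ⊆ h, [h,m] ⊆ m and [m,m] ⊆ h, for any nonzero
real parameters k₁, k₂. -/
theorem mutated_algebra_is_symmetric (k₁ k₂ : ℝ) (hk₁ : k₁ ≠ 0) (hk₂ : k₂ ≠ 0) :
    (∀ x ∈ hSub, ∀ y ∈ hSub, x * y - y * x ∈ hSub)
    ∧ (∀ x ∈ hSub, ∀ y ∈ mSub k₁ k₂, x * y - y * x ∈ mSub k₁ k₂)
    ∧ (∀ x ∈ mSub k₁ k₂, ∀ y ∈ mSub k₁ k₂, x * y - y * x ∈ hSub) := by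
  refine ⟨?_, ?_, ?_⟩
  · refine span_bracket ?_
    rintro x ⟨a, b, rfl⟩ y ⟨c, d, rfl⟩
    rw [J5_bracket a b c d]
    exact Submodule.add_mem _
      (Submodule.sub_mem _
        (Submodule.sub_mem _ (Submodule.smul_mem _ _ (J5_mem a d))
          (Submodule.smul_mem _ _ (J5_mem a c)))
        (Submodule.smul_mem _ _ (J5_mem b d)))
      (Submodule.smul_mem _ _ (J5_mem b c))
  · refine span_bracket ?_
    rintro x ⟨c, d, rfl⟩ y ⟨a, rfl⟩
    rw [JM_bracket k₁ k₂ c d a]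
    exact Submodule.sub_mem _ (Submodule.smul_mem _ _ (M5_mem k₁ k₂ c))
      (Submodule.smul_mem _ _ (M5_mem k₁ k₂ d))
  · refine span_bracket ?_
    rintro x ⟨a, rfl⟩ y ⟨b, rfl⟩
    rw [MM_bracket k₁ k₂ a b]
    exact Submodule.smul_mem _ _ (J5_mem a b)
end
end

section
/- The mutated Lie algebra g' with parameters k₁, k₂ preserves the bilinear form N = diag(η, −k₁/k₂) in the sense that every φ ∈ g' satisfies φ^T N + N φ = 0; hence g' is isomorphic to so(4,1) when k₁/k₂ = −1 and to so(3,2) when k₁/k₂ = +1. -/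
open Matrix

noncomputable section

/-- so(3,1): matrices φ with φᵀ η + η φ = 0. -/
def soL (c : Matrix (Fin 4) (Fin 4) ℝ) : Prop := cᵀ * η4 + η4 * c = 0

/-- Elements of the mutated algebra g': ((c, k₁ v),(k₂ v̄, 0)). -/
def Mmut (k₁ k₂ : ℝ) (c : Matrix (Fin 4) (Fin 4) ℝ) (v : Fin 4 → ℝ) :
    Matrix (Fin 4 ⊕ Fin 1) (Fin 4 ⊕ Fin 1) ℝ :=
  fromBlocks c (k₁ • colv v) (k₂ • rowbar v) 0

/-- The 5×5 block-diagonal metric N = diag(η, −k₁/k₂). -/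
def N5 (k₁ k₂ : ℝ) : Matrix (Fin 4 ⊕ Fin 1) (Fin 4 ⊕ Fin 1) ℝ :=
  fromBlocks η4 0 0 ((-(k₁ / k₂)) • 1)

lemma rowbar_transpose (v : Fin 4 → ℝ) : (rowbar v)ᵀ = η4 * colv v := by
  ext i j
  simp [rowbar, colv, η4, Matrix.mul_apply, Fin.sum_univ_four, Matrix.diagonal]
  fin_cases i <;> simp

lemma colv_transpose_eta (v : Fin 4 → ℝ) : (colv v)ᵀ * η4 = rowbar v := by
  ext i j
  simp [rowbar, colv, Matrix.mul_apply]

/-- every element φ of the mutated algebra g' satisfies φᵀ N + N φ = 0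
for N = diag(η, −k₁/k₂); hence for k₁/k₂ = −1 the metric N is the so(4,1) metric
diag(η, 1), and for k₁/k₂ = +1 it is the so(3,2) metric diag(η, −1). -/
theorem mutated_algebra_preserves_N (k₁ k₂ : ℝ) (hk₂ : k₂ ≠ 0) :
    (∀ (c : Matrix (Fin 4) (Fin 4) ℝ) (v : Fin 4 → ℝ), soL c →
      (Mmut k₁ k₂ c v)ᵀ * N5 k₁ k₂ + N5 k₁ k₂ * Mmut k₁ k₂ c v = 0)
    ∧ (k₁ / k₂ = -1 → N5 k₁ k₂ = fromBlocks η4 0 0 1)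
    ∧ (k₁ / k₂ = 1 → N5 k₁ k₂ = fromBlocks η4 0 0 (-1)) := by
  have hkk : k₂ * (k₁ / k₂) = k₁ := mul_div_cancel₀ _ hk₂
  refine ⟨?_, ?_, ?_⟩
  · intro c v hc
    rw [Mmut, N5, fromBlocks_transpose, fromBlocks_multiply, fromBlocks_multiply,
      fromBlocks_add]
    rw [← fromBlocks_zero, fromBlocks_inj]
    refine ⟨?_, ?_, ?_, ?_⟩
    · simpa [soL] using hc
    · simp [transpose_smul, rowbar_transpose, Matrix.mul_smul, Matrix.smul_mul, hkk,
        smul_smul, mul_comm]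
    · simp [transpose_smul, colv_transpose_eta, Matrix.mul_smul, Matrix.smul_mul,
        smul_smul, hkk, mul_comm]
    · simp
  · intro h; simp [N5, h]
  · intro h; simp [N5, h]
end
end

section
/- Let g = h ⊕ m be a symmetric Lie algebra, P an Ad(G)-invariant symmetric polynomial of degree n, and ϖ = ϖ_h ⊕ ϖ_m a g-valued Cartan connection with curvature Ω̄ = Ω̄_h ⊕ Ω̄_m satisfying the Bianchi identity. Then d P(Ω̄_h^n) = −n P([ϖ_m, Ω̄_m], Ω̄_h^{n−1}); moreover, using Ad(m)-invariance this equals n(n−1) P([ϖ_m, Ω̄_h], Ω̄_h^{n−2}, Ω̄_m). -/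
/-- let g = h ⊕ m be a symmetric Lie algebra, P an Ad(G)-invariant
symmetric polynomial of degree n = m+2, and ϖ = ϖ_h ⊕ ϖ_m a g-valued Cartan
connection with curvature Ω̄ = Ω̄_h ⊕ Ω̄_m satisfying the (h-part of the) Bianchi
identity.  Then d P(Ω̄_h^n) = −n P([ϖ_m, Ω̄_m], Ω̄_h^{n−1}), and moreover, using the
Ad(m)-invariance, this equals n(n−1) P([ϖ_m, Ω̄_h], Ω̄_m, Ω̄_h^{n−2}).
Here `M` is the module of g-valued forms with bracket `br`, `E` the module of scalar
forms, `d`/`dM` the exterior differentials, and `P` a symmetric multilinear map;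
`hdP` encodes d P(x,…,x) = n P(dx, x, …, x) and `hinv` the Ad(G)-invariance. -/
theorem invariant_polynomial_dP
    {E M : Type*} [AddCommGroup E] [Module ℝ E] [AddCommGroup M] [Module ℝ M]
    (m : ℕ)
    (P : MultilinearMap ℝ (fun _ : Fin (m + 2) => M) E)
    (hsym : ∀ (args : Fin (m + 2) → M) (σ : Equiv.Perm (Fin (m + 2))),
      P (args ∘ σ) = P args)
    (d : E →ₗ[ℝ] E) (dM : M →ₗ[ℝ] M)
    (br : M →ₗ[ℝ] M →ₗ[ℝ] M)
    (ϖh ϖm Ωh Ωm : M)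
    (hBianchi : dM Ωh + br ϖh Ωh + br ϖm Ωm = 0)
    (hdP : ∀ x : M, d (P fun _ => x) = (m + 2) • P (Fin.cons (dM x) fun _ => x))
    (hinv : ∀ (ξ : M) (args : Fin (m + 2) → M),
      ∑ i, P (Function.update args i (br ξ (args i))) = 0) :
    d (P fun _ => Ωh) = -((m + 2) • P (Fin.cons (br ϖm Ωm) fun _ => Ωh))
    ∧ d (P fun _ => Ωh)
        = ((m + 2) * (m + 1)) • P (Fin.cons (br ϖm Ωh) (Fin.cons Ωm fun _ => Ωh)) := by
  classical
  set c2 : Fin (m + 2) → M := fun _ => Ωh with hc2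
  set c1 : Fin (m + 1) → M := fun _ => Ωh with hc1
  set c0 : Fin m → M := fun _ => Ωh with hc0
  have hone : (1 : Fin (m + 2)) = Fin.succ 0 := by
    ext; simp
  -- value of `Fin.cons Ωm c1` away from 0
  have hne : ∀ y : Fin (m + 2), y ≠ 0 → (Fin.cons Ωm c1 : Fin (m + 2) → M) y = Ωh := by
    intro y
    refine Fin.cases ?_ ?_ y
    · intro h; exact absurd rfl h
    · intro z _; exact Fin.cons_succ _ _ _
  -- constant composed with anything is itself
  have hconst : ∀ σ : Equiv.Perm (Fin (m + 2)), c2 ∘ σ = c2 := fun _ => rfl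
  -- update of the constant at any index equals a cons
  have hcons0 : ∀ v : M, Function.update c2 0 v = Fin.cons v c1 := by
    intro v; funext x
    refine Fin.cases ?_ ?_ x
    · simp
    · intro y; simp [Fin.succ_ne_zero, hc2, hc1]
  have hupd : ∀ (v : M) (i : Fin (m + 2)),
      P (Function.update c2 i v) = P (Fin.cons v c1) := by
    intro v i
    have h1 : Function.update c2 i v ∘ (Equiv.swap 0 i) = Fin.cons v c1 := by
      rw [Function.update_comp_equiv, Equiv.symm_swap, Equiv.swap_apply_right,
        hconst, hcons0]
    have h2 := hsym (Function.update c2 i v) (Equiv.swap 0 i)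
    rw [h1] at h2
    exact h2.symm
  set A := P (Fin.cons (br ϖh Ωh) c1) with hA'
  set B := P (Fin.cons (br ϖm Ωm) c1) with hB'
  set C := P (Fin.cons (br ϖm Ωh) (Fin.cons Ωm c0)) with hC'
  -- Step 1 : A = 0
  have hAzero : A = 0 := by
    have h := hinv ϖh c2
    have h2 : ∀ i ∈ Finset.univ, P (Function.update c2 i (br ϖh (c2 i))) = A :=
      fun i _ => hupd _ i
    rw [Finset.sum_congr rfl h2, Finset.sum_const, Finset.card_univ,
      Fintype.card_fin] at h
    have h3 : ((m + 2 : ℕ) : ℝ) • A = 0 := by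
      rw [Nat.cast_smul_eq_nsmul]; exact h
    rcases smul_eq_zero.mp h3 with h4 | h4
    · exact absurd h4 (by positivity)
    · exact h4
  -- Step 2 : B = -((m+1) • C)
  have hBC : B = -((m + 1) • C) := by
    set args2 : Fin (m + 2) → M := Fin.cons Ωm c1 with hargs2
    have h := hinv ϖm args2
    rw [Fin.sum_univ_succ] at h
    have hhead : Function.update args2 0 (br ϖm (args2 0))
        = Fin.cons (br ϖm Ωm) c1 := by
      rw [hargs2, Fin.cons_zero, Fin.update_cons_zero]
    rw [hhead] at h
    have htail : ∀ j : Fin (m + 1),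
        P (Function.update args2 j.succ (br ϖm (args2 j.succ))) = C := by
      intro j
      have hj : args2 j.succ = Ωh := Fin.cons_succ _ _ _
      rw [hj]
      set v := br ϖm Ωh with hv
      -- first move the update from position j.succ to position 1
      have e0 : args2 ∘ (Equiv.swap 1 j.succ) = args2 := by
        funext x
        rcases eq_or_ne x 0 with rfl | hx
        · rw [Function.comp_apply,
            Equiv.swap_apply_of_ne_of_ne Fin.zero_ne_one (Fin.succ_ne_zero j).symm]
        · have hxs : (Equiv.swap (1 : Fin (m + 2)) j.succ) x ≠ 0 := by
            intro hz
            apply hx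
            have h0 : (Equiv.swap (1 : Fin (m + 2)) j.succ) 0 = 0 :=
              Equiv.swap_apply_of_ne_of_ne Fin.zero_ne_one (Fin.succ_ne_zero j).symm
            exact (Equiv.swap (1 : Fin (m + 2)) j.succ).injective (hz.trans h0.symm)
          rw [Function.comp_apply, hne _ hxs, hne _ hx]
      have e1 : Function.update args2 j.succ v ∘ (Equiv.swap 1 j.succ)
          = Function.update args2 1 v := by
        rw [Function.update_comp_equiv, Equiv.symm_swap, Equiv.swap_apply_right, e0]
      have step1 := hsym (Function.update args2 j.succ v) (Equiv.swap 1 j.succ)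
      rw [e1] at step1
      -- now move from position 1 to position 0, matching C
      have e2 : Function.update args2 1 v ∘ (Equiv.swap 0 1)
          = Fin.cons v (Fin.cons Ωm c0) := by
        rw [Function.update_comp_equiv, Equiv.symm_swap, Equiv.swap_apply_right]
        funext x
        rcases eq_or_ne x 0 with rfl | hx0
        · rw [Function.update_self, Fin.cons_zero]
        · rw [Function.update_of_ne hx0]
          rcases eq_or_ne x 1 with rfl | hx1
          · rw [Function.comp_apply, Equiv.swap_apply_right, hargs2, Fin.cons_zero, hone,
              Fin.cons_succ, Fin.cons_zero]
          · have hfix : (Equiv.swap (0 : Fin (m + 2)) 1) x = x :=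
              Equiv.swap_apply_of_ne_of_ne hx0 hx1
            rw [Function.comp_apply, hfix, hne _ hx0]
            -- RHS : Fin.cons v (Fin.cons Ωm c0) x = Ωh
            revert hx0 hx1
            refine Fin.cases ?_ ?_ x
            · intro h _; exact absurd rfl h
            · intro z
              refine Fin.cases ?_ ?_ z
              · intro _ h1; exact absurd hone.symm h1
              · intro w _ _
                rw [Fin.cons_succ, Fin.cons_succ]
      have step2 := hsym (Function.update args2 1 v) (Equiv.swap 0 1)
      rw [e2] at step2
      rw [← step1, ← step2, hC']
    rw [Finset.sum_congr rfl (fun j _ => htail j), Finset.sum_const, Finset.card_univ,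
      Fintype.card_fin] at h
    exact eq_neg_of_add_eq_zero_left h
  -- Step 3 : assemble
  have hd : dM Ωh = -(br ϖh Ωh) + -(br ϖm Ωm) := by
    rw [add_assoc] at hBianchi
    rw [eq_neg_of_add_eq_zero_left hBianchi]
    abel
  have hsplit : P (Fin.cons (dM Ωh) c1) = -A + -B := by
    rw [hd, P.cons_add, hA', hB']
    congr 1
    · rw [show (Fin.cons (-(br ϖh Ωh)) c1 : Fin (m + 2) → M)
          = Function.update (Fin.cons (br ϖh Ωh) c1) 0 (-(br ϖh Ωh)) from
        (Fin.update_cons_zero _ _ _).symm, P.map_update_neg, Fin.update_cons_zero]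
    · rw [show (Fin.cons (-(br ϖm Ωm)) c1 : Fin (m + 2) → M)
          = Function.update (Fin.cons (br ϖm Ωm) c1) 0 (-(br ϖm Ωm)) from
        (Fin.update_cons_zero _ _ _).symm, P.map_update_neg, Fin.update_cons_zero]
  have hmain : d (P fun _ => Ωh) = (m + 2) • P (Fin.cons (dM Ωh) c1) := hdP Ωh
  constructor
  · rw [hmain, hsplit, hAzero]
    simp
  · rw [hmain, hsplit, hAzero, hBC]
    simp [mul_smul]
end
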